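/- Atomic instance of generalised Harrop's rule is valid in the complete system: For distinct atomic formulas p, q, r and every set S of atomic rules, relative to the complete system the open one-premise argument from p→(q∨r) to (p→q)∨(p→r) is S-valid; equivalently, the formula (p→(q∨r))→((p→q)∨(p→r)) holds in the complete system, i.e., every S has a closed S-valid argument for it. -/

import Mathlib

/-!
Common framework for proof-theoretic validity (Prawitz / Piecha–Schroeder-Heister style).

* Propositional formulas over countably many atoms (`ℕ`), with `⊥`, `∧`, `∨`, `→`;
  `¬A` abbreviates `A → ⊥`.
* Higher-level atomic rules: a rule has a finite list of premises, each premise being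
  a pair of (a finite list of lower-level rules that may be discharged, an atomic
  conclusion), together with an atomic conclusion.  An atomic axiom `p̄` is
  `HLRule.mk [] p`; an assumption of an atom is identified with its axiom rule.
* `AtDeriv S p`: the atom `p` is derivable using only rules of `S`
  (discharged rules become available).
* `Deriv S Γ φ`: natural deduction NJ augmented with the atomic rules in `S`,
  from hypotheses `Γ`.  `⊢_IPC` is `Deriv ∅ ∅`.
* `Valid 𝔖 S φ` formalizes "there is a closed `S`-valid argument for `φ`" relative to
  the proof-theoretic system `𝔖` (acceptable extensions of `S` are the supersets of `S`
  belonging to `𝔖`).  Unfolding the inductive definition of `S`-validity of arguments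
  (atomic case, closed introduction case, closed non-introduction case, open case)
  clause-by-clause on the conclusion yields exactly the following recursion on formulas:
  a closed valid argument for `A ∧ B` reduces (via the non-introduction case) to one
  ending in `∧`-introduction, i.e. closed valid arguments for `A` and `B`; similarly for
  `∨`; a closed valid argument for `A → B` reduces to one ending in `→`-introduction,
  whose immediate subargument is an open argument of `B` from the assumption `A`, which
  by the open case is valid iff every acceptable extension `S' ∈ 𝔖` of `S` having a
  closed `S'`-valid argument for `A` has one for `B`; a closed valid argument for an
  atom `p` exists iff `p` is `S`-derivable; and for `⊥` (which has no introduction rule,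
  and is governed by the rules `⊥/p` for every atom `p`) iff every atom is `S`-derivable.
-/

/-- Propositional formulas over atoms `ℕ`. -/
inductive PropForm : Type
  | atom : ℕ → PropForm
  | falsum : PropForm
  | conj : PropForm → PropForm → PropForm
  | disj : PropForm → PropForm → PropForm
  | impl : PropForm → PropForm → PropForm
  deriving DecidableEq

/-- `¬A` abbreviates `A → ⊥`. -/
def PropForm.neg (A : PropForm) : PropForm := .impl A .falsum

/-- Higher-level atomic rules. -/
inductive HLRule : Type
  | mk : List (List HLRule × ℕ) → ℕ → HLRule

/-- `AtDeriv S p`: the atom `p` is derivable using only the atomic rules in `S`;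
applying a rule requires deriving each premise with its discharged rules made available. -/
inductive AtDeriv : Set HLRule → ℕ → Prop
  | app (S : Set HLRule) (prems : List (List HLRule × ℕ)) (concl : ℕ)
      (hmem : HLRule.mk prems concl ∈ S)
      (hprem : ∀ pr ∈ prems, AtDeriv (S ∪ {R | R ∈ pr.1}) pr.2) :
      AtDeriv S concl

/-- Natural deduction NJ for intuitionistic propositional logic, augmented with the
atomic rules in `S`, with hypotheses `Γ`.  `Deriv ∅ Γ φ` is `Γ ⊢_IPC φ`. -/
inductive Deriv : Set HLRule → Set PropForm → PropForm → Prop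
  | hyp {S : Set HLRule} {Γ : Set PropForm} {A : PropForm} :
      A ∈ Γ → Deriv S Γ A
  | falsumE {S : Set HLRule} {Γ : Set PropForm} {A : PropForm} :
      Deriv S Γ .falsum → Deriv S Γ A
  | andI {S : Set HLRule} {Γ : Set PropForm} {A B : PropForm} :
      Deriv S Γ A → Deriv S Γ B → Deriv S Γ (.conj A B)
  | andE1 {S : Set HLRule} {Γ : Set PropForm} {A B : PropForm} :
      Deriv S Γ (.conj A B) → Deriv S Γ A
  | andE2 {S : Set HLRule} {Γ : Set PropForm} {A B : PropForm} :
      Deriv S Γ (.conj A B) → Deriv S Γ B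
  | orI1 {S : Set HLRule} {Γ : Set PropForm} {A B : PropForm} :
      Deriv S Γ A → Deriv S Γ (.disj A B)
  | orI2 {S : Set HLRule} {Γ : Set PropForm} {A B : PropForm} :
      Deriv S Γ B → Deriv S Γ (.disj A B)
  | orE {S : Set HLRule} {Γ : Set PropForm} {A B C : PropForm} :
      Deriv S Γ (.disj A B) → Deriv S (insert A Γ) C → Deriv S (insert B Γ) C →
      Deriv S Γ C
  | implI {S : Set HLRule} {Γ : Set PropForm} {A B : PropForm} :
      Deriv S (insert A Γ) B → Deriv S Γ (.impl A B)
  | implE {S : Set HLRule} {Γ : Set PropForm} {A B : PropForm} :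
      Deriv S Γ (.impl A B) → Deriv S Γ A → Deriv S Γ B
  | rule {S : Set HLRule} {Γ : Set PropForm}
      (prems : List (List HLRule × ℕ)) (concl : ℕ) :
      HLRule.mk prems concl ∈ S →
      (∀ pr ∈ prems, Deriv (S ∪ {R | R ∈ pr.1}) Γ (.atom pr.2)) →
      Deriv S Γ (.atom concl)

/-- `⊢_IPC φ` : derivability of `φ` in intuitionistic propositional natural deduction. -/
def IPC (φ : PropForm) : Prop := Deriv ∅ ∅ φ

/-- Auxiliary form of validity, by recursion on the formula. -/
def ValidAux (𝔖 : Set (Set HLRule)) : PropForm → Set HLRule → Prop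
  | .atom p, S => AtDeriv S p
  | .falsum, S => ∀ a : ℕ, AtDeriv S a
  | .conj A B, S => ValidAux 𝔖 A S ∧ ValidAux 𝔖 B S
  | .disj A B, S => ValidAux 𝔖 A S ∨ ValidAux 𝔖 B S
  | .impl A B, S => ∀ S' ∈ 𝔖, S ⊆ S' → ValidAux 𝔖 A S' → ValidAux 𝔖 B S'

/-- `Valid 𝔖 S φ`: relative to the proof-theoretic system `𝔖` (in which the acceptable
extensions of `S` are exactly the supersets of `S` belonging to `𝔖`), there is a closed
`S`-valid argument for `φ`. -/
def Valid (𝔖 : Set (Set HLRule)) (S : Set HLRule) (φ : PropForm) : Prop :=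
  ValidAux 𝔖 φ S

/-- `𝔖 ⊨ φ`: for every `S ∈ 𝔖` there is a closed `S`-valid argument for `φ`
(acceptable extensions taken in `𝔖`). -/
def Models (𝔖 : Set (Set HLRule)) (φ : PropForm) : Prop :=
  ∀ S ∈ 𝔖, Valid 𝔖 S φ

/-- The complete proof-theoretic system: all sets of atomic rules of all levels. -/
def completeSystem : Set (Set HLRule) := Set.univ

/-- `S`-validity of the open one-premise/one-assumption argument from `A` to `B`
(relative to `𝔖`): by the open case, for every acceptable extension `S' ∈ 𝔖` of `S`,
substituting any closed `S'`-valid argument for the assumption `A` yields an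
`S'`-valid closed argument, which (the final step not being an introduction rule)
amounts to the existence of a closed `S'`-valid argument for `B`. -/
def OpenArgValid1 (𝔖 : Set (Set HLRule)) (S : Set HLRule) (A B : PropForm) : Prop :=
  ∀ S' ∈ 𝔖, S ⊆ S' → Valid 𝔖 S' A → Valid 𝔖 S' B

/-!
A closed valid argument for `p → (q ∨ r)` over `S'` applies in particular to the extension
`S' ∪ {p̄}` by the axiom `p̄`, giving a derivation of `q` or of `r` there. In any further
extension `T ⊇ S'` in which `p` is derivable, the axiom `p̄` can be eliminated by plugging in
that derivation of `p`, so `p → q` (respectively `p → r`) is valid over `S'`.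
-/

namespace AtDeriv

theorem mono {S T : Set HLRule} {a : ℕ} (h : AtDeriv S a) (hST : S ⊆ T) : AtDeriv T a := by
  induction h generalizing T with
  | app S prems concl hmem _ ih =>
    exact app T prems concl (hST hmem) fun pr hpr => ih pr hpr (Set.union_subset_union_left _ hST)

theorem of_axiom_mem {S : Set HLRule} {p : ℕ} (h : HLRule.mk [] p ∈ S) : AtDeriv S p :=
  app S [] p h (by simp)

/-- Stated for `S ⊆ T ∪ {p̄}` rather than `S = T ∪ {p̄}` so that the induction passes through
the rules discharged at each premise. -/
theorem elim_axiom {S T : Set HLRule} {p a : ℕ} (h : AtDeriv S a)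
    (hST : S ⊆ T ∪ {HLRule.mk [] p}) (hp : AtDeriv T p) : AtDeriv T a := by
  induction h generalizing T with
  | app S prems concl hmem _ ih =>
    rcases hST hmem with hT | hax
    · refine app T prems concl hT fun pr hpr => ih pr hpr ?_ (hp.mono Set.subset_union_left)
      rintro R (hS | hpr)
      · rcases hST hS with hT | hax
        · exact Or.inl (Or.inl hT)
        · exact Or.inr hax
      · exact Or.inl (Or.inr hpr)
    · obtain ⟨-, rfl⟩ := HLRule.mk.inj hax
      exact hp

end AtDeriv

theorem Valid.union_axiom {S : Set HLRule} {p : ℕ} {B : PropForm}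
    (h : Valid completeSystem S (.impl (.atom p) B)) :
    Valid completeSystem (S ∪ {HLRule.mk [] p}) B :=
  h _ trivial Set.subset_union_left (AtDeriv.of_axiom_mem (Or.inr rfl))

theorem valid_impl_atom_of_atDeriv_union_axiom {S : Set HLRule} {p a : ℕ}
    (h : AtDeriv (S ∪ {HLRule.mk [] p}) a) : Valid completeSystem S (.impl (.atom p) (.atom a)) :=
  fun _ _ hST hp => h.elim_axiom (Set.union_subset_union_left _ hST) hp

theorem atomic_generalised_harrop_valid_general (p q r : ℕ) (S : Set HLRule) :
    OpenArgValid1 completeSystem S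
        (.impl (.atom p) (.disj (.atom q) (.atom r)))
        (.disj (.impl (.atom p) (.atom q)) (.impl (.atom p) (.atom r))) ∧
      Valid completeSystem S
        (.impl (.impl (.atom p) (.disj (.atom q) (.atom r)))
          (.disj (.impl (.atom p) (.atom q)) (.impl (.atom p) (.atom r)))) := by
  have harrop : OpenArgValid1 completeSystem S
      (.impl (.atom p) (.disj (.atom q) (.atom r)))
      (.disj (.impl (.atom p) (.atom q)) (.impl (.atom p) (.atom r))) := by
    intro S' _ _ hval
    rcases hval.union_axiom with hq | hr
    · exact Or.inl (valid_impl_atom_of_atDeriv_union_axiom hq)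
    · exact Or.inr (valid_impl_atom_of_atDeriv_union_axiom hr)
  -- validity of a closed implication unfolds to validity of the open argument
  exact ⟨harrop, harrop⟩

/-- **Atomic instance of generalised Harrop's rule is valid in the complete system.**
For distinct atoms `p, q, r` and every set `S` of atomic rules, relative to the
complete system the open one-premise argument from `p → (q ∨ r)` to
`(p → q) ∨ (p → r)` is `S`-valid; equivalently, every `S` has a closed `S`-valid
argument for `(p → (q ∨ r)) → ((p → q) ∨ (p → r))`. -/
theorem atomic_generalised_harrop_valid (p q r : ℕ)
    (hpq : p ≠ q) (hpr : p ≠ r) (hqr : q ≠ r) (S : Set HLRule) :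
    OpenArgValid1 completeSystem S
        (.impl (.atom p) (.disj (.atom q) (.atom r)))
        (.disj (.impl (.atom p) (.atom q)) (.impl (.atom p) (.atom r))) ∧
      Valid completeSystem S
        (.impl (.impl (.atom p) (.disj (.atom q) (.atom r)))
          (.disj (.impl (.atom p) (.atom q)) (.impl (.atom p) (.atom r)))) :=
  atomic_generalised_harrop_valid_general p q r S
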